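/- Let a = (a_0, a_1), b = (b_0, b_1), c = (c_0, c_1), d = (d_0, d_1) be vectors in ℂ² with c and d linearly independent, and let n ≥ 3. If a_0^{n−k} a_1^k + b_0^{n−k} b_1^k = c_0^{n−k} c_1^k + d_0^{n−k} d_1^k for all 0 ≤ k ≤ n, then there exist ω_0, ω_1 ∈ ℂ with ω_0^n = ω_1^n = 1 such that either (a = ω_0 c and b = ω_1 d) or (a = ω_0 d and b = ω_1 c). -/

import Mathlib

/-!
Write `ℓ_p(x) = x₀ p₁ - x₁ p₀` for the linear form vanishing on `p`. Contracting a symmetric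
tensor power with a linear form lowers its degree by one: `ℓ ⌟ u^{⊗k} = ℓ(u) u^{⊗(k-1)}`.
Contracting `a^{⊗n} + b^{⊗n} = c^{⊗n} + d^{⊗n}` with `ℓ_c` and then `ℓ_d` kills the right side
and leaves `ℓ_c(a) ℓ_d(a) a^{⊗(n-2)} + ℓ_c(b) ℓ_d(b) b^{⊗(n-2)} = 0`. Powers of degree `≥ 1` of
two independent vectors are independent, so if `a, b` are independent then each of them is
proportional to `c` or to `d`, necessarily to different ones, and comparing the original
identity gives the roots of unity. If `a, b` are dependent, contracting twice with `ℓ_a`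
instead makes `a` proportional to both `c` and `d`, so `a = 0`; likewise `b = 0`, which
contradicts `c^{⊗n} + d^{⊗n} ≠ 0`.
-/

namespace SymmetricTensor

variable {K : Type*} [Field K]

/-- The entry `u₀^j u₁^k` of `u^{⊗(j+k)}`. Collecting all degrees in one function lets an
identity between tensor powers of degree `n` be stated as vanishing on the line `j + k = n`. -/
def entry (u : K × K) (j k : ℕ) : K := u.1 ^ j * u.2 ^ k

def cross (u v : K × K) : K := u.1 * v.2 - u.2 * v.1

def VanishesInDegree (n : ℕ) (T : ℕ → ℕ → K) : Prop := ∀ j k, j + k = n → T j k = 0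

/-- Contraction with the linear form `x ↦ cross x p`. -/
def contract (p : K × K) : (ℕ → ℕ → K) →ₗ[K] ℕ → ℕ → K where
  toFun T j k := p.2 * T (j + 1) k - p.1 * T j (k + 1)
  map_add' T S := by ext j k; simp only [Pi.add_apply]; ring
  map_smul' c T := by ext j k; simp only [Pi.smul_apply, smul_eq_mul, RingHom.id_apply]; ring

@[simp]
lemma cross_self (u : K × K) : cross u u = 0 := by
  unfold cross; ring

lemma cross_swap (u v : K × K) : cross v u = -cross u v := by
  unfold cross; ring

lemma entry_smul (ω : K) (u : K × K) (j k : ℕ) :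
    entry (ω • u) j k = ω ^ (j + k) * entry u j k := by
  simp only [entry, Prod.smul_fst, Prod.smul_snd, smul_eq_mul]; ring

@[simp]
lemma contract_entry (p u : K × K) : contract p (entry u) = cross u p • entry u := by
  ext j k
  simp only [contract, LinearMap.coe_mk, AddHom.coe_mk, Pi.smul_apply, smul_eq_mul, entry, cross]
  ring

lemma VanishesInDegree.contract {n : ℕ} {T : ℕ → ℕ → K} (hT : VanishesInDegree (n + 1) T)
    (p : K × K) : VanishesInDegree n (contract p T) := fun j k hjk => by
  simp [SymmetricTensor.contract, hT (j + 1) k (by omega), hT j (k + 1) (by omega)]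

lemma exists_eq_smul_of_cross_eq_zero {u v : K × K} (hu : u ≠ 0) (h : cross u v = 0) :
    ∃ ω : K, v = ω • u := by
  obtain ⟨u₀, u₁⟩ := u
  obtain ⟨v₀, v₁⟩ := v
  simp only [cross] at h
  by_cases h₀ : u₀ = 0
  · have h₁ : u₁ ≠ 0 := fun h₁ => hu (by simp [h₀, h₁])
    refine ⟨v₁ / u₁, Prod.ext ?_ ?_⟩ <;> simp only [Prod.smul_mk, smul_eq_mul] <;> field_simp
    · simpa [h₀, h₁] using h
  · refine ⟨v₀ / u₀, Prod.ext ?_ ?_⟩ <;> simp only [Prod.smul_mk, smul_eq_mul] <;> field_simp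
    linear_combination h

lemma eq_zero_of_cross_eq_zero {u v w : K × K} (huv : cross u v ≠ 0) (hu : cross u w = 0)
    (hv : cross v w = 0) : w = 0 := by
  unfold cross at *
  have h₀ : w.1 * (u.1 * v.2 - u.2 * v.1) = 0 := by linear_combination v.1 * hu - u.1 * hv
  have h₁ : w.2 * (u.1 * v.2 - u.2 * v.1) = 0 := by linear_combination v.2 * hu - u.2 * hv
  exact Prod.ext ((mul_eq_zero.1 h₀).resolve_right huv) ((mul_eq_zero.1 h₁).resolve_right huv)

lemma cross_ne_zero_of_linearIndependent {u v : K × K} (h : LinearIndependent K ![u, v]) :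
    cross u v ≠ 0 := fun huv => by
  have hu : u ≠ 0 := by simpa using h.ne_zero 0
  obtain ⟨ω, hω⟩ := exists_eq_smul_of_cross_eq_zero hu huv
  exact (LinearIndependent.pair_iff' hu).1 h ω hω.symm

lemma VanishesInDegree.eq_zero_of_smul_entry {m : ℕ} {c : K} {u : K × K} (hu : u ≠ 0)
    (h : VanishesInDegree m (c • entry u)) : c = 0 := by
  have hm₀ := h m 0 rfl
  have hm₁ := h 0 m (zero_add m)
  simp only [Pi.smul_apply, smul_eq_mul, entry, pow_zero, mul_one, one_mul, mul_eq_zero] at hm₀ hm₁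
  by_contra hc
  exact hu (Prod.ext (eq_zero_of_pow_eq_zero (hm₀.resolve_left hc))
    (eq_zero_of_pow_eq_zero (hm₁.resolve_left hc)))

lemma VanishesInDegree.eq_zero_of_smul_entry_add_smul_entry {m : ℕ} {L M : K} {u v : K × K}
    (huv : cross u v ≠ 0) (h : VanishesInDegree (m + 1) (L • entry u + M • entry v)) :
    L = 0 ∧ M = 0 := by
  have left : ∀ {L M : K} {u v : K × K}, cross u v ≠ 0 →
      VanishesInDegree (m + 1) (L • entry u + M • entry v) → L = 0 := by
    intro L M u v huv h
    have hu : u ≠ 0 := by rintro rfl; simp [cross] at huv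
    have hL := h.contract v
    simp only [map_add, map_smul, contract_entry, cross_self, zero_smul, smul_zero, add_zero,
      smul_smul] at hL
    exact (mul_eq_zero.1 (hL.eq_zero_of_smul_entry hu)).resolve_right huv
  exact ⟨left huv h, left (by rwa [cross_swap, neg_ne_zero]) (by rwa [add_comm (L • entry u)] at h)⟩

section Decomposition

variable {m : ℕ} {a b c d : K × K}

lemma eq_zero_of_cross_eq_zero_of_vanishesInDegree (hcd : cross c d ≠ 0)
    (hT : VanishesInDegree (m + 3) (entry a + entry b - entry c - entry d))
    (hab : cross a b = 0) : a = 0 := by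
  have hba : cross b a = 0 := by rw [cross_swap, hab, neg_zero]
  have h := (hT.contract a).contract a
  have hcontract : contract a (contract a (entry a + entry b - entry c - entry d)) =
      (-(cross c a * cross c a)) • entry c + (-(cross d a * cross d a)) • entry d := by
    simp only [map_add, map_sub, map_smul, contract_entry, cross_self, hba, zero_smul,
      map_zero, smul_smul]
    module
  rw [hcontract] at h
  obtain ⟨hc, hd⟩ := h.eq_zero_of_smul_entry_add_smul_entry hcd
  exact eq_zero_of_cross_eq_zero hcd (by simpa using hc) (by simpa using hd)

lemma exists_eq_smul_of_vanishesInDegree (hcd : cross c d ≠ 0)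
    (hT : VanishesInDegree (m + 3) (entry a + entry b - entry c - entry d))
    (hab : cross a b ≠ 0) :
    ∃ ω₀ ω₁ : K, (a = ω₀ • c ∧ b = ω₁ • d) ∨ (a = ω₀ • d ∧ b = ω₁ • c) := by
  have hc : c ≠ 0 := by rintro rfl; simp [cross] at hcd
  have hd : d ≠ 0 := by rintro rfl; simp [cross] at hcd
  have h := (hT.contract c).contract d
  have hcontract : contract d (contract c (entry a + entry b - entry c - entry d)) =
      (cross a c * cross a d) • entry a + (cross b c * cross b d) • entry b := by
    simp only [map_add, map_sub, map_smul, contract_entry, cross_self, zero_smul, smul_zero,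
      smul_smul, sub_zero]
  rw [hcontract] at h
  obtain ⟨ha, hb⟩ := h.eq_zero_of_smul_entry_add_smul_entry hab
  rw [mul_eq_zero] at ha hb
  rcases ha with hac | had <;> rcases hb with hbc | hbd
  · exact absurd (eq_zero_of_cross_eq_zero hab hac hbc) hc
  · obtain ⟨ω₀, rfl⟩ := exists_eq_smul_of_cross_eq_zero hc (by rwa [cross_swap, neg_eq_zero])
    obtain ⟨ω₁, rfl⟩ := exists_eq_smul_of_cross_eq_zero hd (by rwa [cross_swap, neg_eq_zero])
    exact ⟨ω₀, ω₁, Or.inl ⟨rfl, rfl⟩⟩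
  · obtain ⟨ω₀, rfl⟩ := exists_eq_smul_of_cross_eq_zero hd (by rwa [cross_swap, neg_eq_zero])
    obtain ⟨ω₁, rfl⟩ := exists_eq_smul_of_cross_eq_zero hc (by rwa [cross_swap, neg_eq_zero])
    exact ⟨ω₀, ω₁, Or.inr ⟨rfl, rfl⟩⟩
  · exact absurd (eq_zero_of_cross_eq_zero hab had hbd) hd

lemma pow_eq_one_of_vanishesInDegree {ω₀ ω₁ : K} (hcd : cross c d ≠ 0)
    (hT : VanishesInDegree (m + 1) (entry (ω₀ • c) + entry (ω₁ • d) - entry c - entry d)) :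
    ω₀ ^ (m + 1) = 1 ∧ ω₁ ^ (m + 1) = 1 := by
  have h : VanishesInDegree (m + 1) ((ω₀ ^ (m + 1) - 1) • entry c + (ω₁ ^ (m + 1) - 1) • entry d) :=
    fun j k hjk => by
      have := hT j k hjk
      simp only [Pi.add_apply, Pi.sub_apply, Pi.smul_apply, smul_eq_mul, entry_smul, hjk] at this ⊢
      linear_combination this
  simpa [sub_eq_zero] using h.eq_zero_of_smul_entry_add_smul_entry hcd

theorem exists_pow_eq_one_of_vanishesInDegree (hcd : cross c d ≠ 0)
    (hT : VanishesInDegree (m + 3) (entry a + entry b - entry c - entry d)) :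
    ∃ ω₀ ω₁ : K, ω₀ ^ (m + 3) = 1 ∧ ω₁ ^ (m + 3) = 1 ∧
      ((a = ω₀ • c ∧ b = ω₁ • d) ∨ (a = ω₀ • d ∧ b = ω₁ • c)) := by
  by_cases hab : cross a b = 0
  · have ha := eq_zero_of_cross_eq_zero_of_vanishesInDegree hcd hT hab
    have hb := eq_zero_of_cross_eq_zero_of_vanishesInDegree hcd (by rwa [add_comm (entry a)] at hT)
      (by rw [cross_swap, hab, neg_zero])
    subst ha hb
    have h0 := pow_eq_one_of_vanishesInDegree (ω₀ := 0) (ω₁ := 0) hcd (by simpa using hT)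
    simp at h0
  obtain ⟨ω₀, ω₁, ⟨rfl, rfl⟩ | ⟨rfl, rfl⟩⟩ := exists_eq_smul_of_vanishesInDegree hcd hT hab
  · obtain ⟨h₀, h₁⟩ := pow_eq_one_of_vanishesInDegree hcd hT
    exact ⟨ω₀, ω₁, h₀, h₁, Or.inl ⟨rfl, rfl⟩⟩
  · rw [add_comm (entry _)] at hT
    obtain ⟨h₁, h₀⟩ := pow_eq_one_of_vanishesInDegree hcd hT
    exact ⟨ω₀, ω₁, h₀, h₁, Or.inr ⟨rfl, rfl⟩⟩

end Decomposition

end SymmetricTensor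

theorem stmt_4 (n : ℕ) (hn : 3 ≤ n) (a₀ a₁ b₀ b₁ c₀ c₁ d₀ d₁ : ℂ)
    (hcd : LinearIndependent ℂ ![(c₀, c₁), (d₀, d₁)])
    (h : ∀ k ≤ n, a₀ ^ (n - k) * a₁ ^ k + b₀ ^ (n - k) * b₁ ^ k
        = c₀ ^ (n - k) * c₁ ^ k + d₀ ^ (n - k) * d₁ ^ k) :
    ∃ ω₀ ω₁ : ℂ, ω₀ ^ n = 1 ∧ ω₁ ^ n = 1 ∧
      (((a₀, a₁) = ω₀ • (c₀, c₁) ∧ (b₀, b₁) = ω₁ • (d₀, d₁)) ∨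
        ((a₀, a₁) = ω₀ • (d₀, d₁) ∧ (b₀, b₁) = ω₁ • (c₀, c₁))) := by
  obtain ⟨m, rfl⟩ : ∃ m, n = m + 3 := ⟨n - 3, by omega⟩
  refine SymmetricTensor.exists_pow_eq_one_of_vanishesInDegree
    (SymmetricTensor.cross_ne_zero_of_linearIndependent hcd) fun j k hjk => ?_
  have hk := h k (by omega)
  rw [show m + 3 - k = j by omega] at hk
  simp only [Pi.add_apply, Pi.sub_apply, SymmetricTensor.entry]
  linear_combination hk
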